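/- (Entropy production in the vanishing-pressure limit.) Let u_l > u_r, ρ_l, ρ_r > 0, and for ε ∈ (0, η) let (u*_ε, ρ*_ε), s₁(ε), s₂(ε) be as in the two-shock Riemann solution (satisfying the two Rankine–Hugoniot equations with u_r < u*_ε < u_l, ρ*_ε > max(ρ_l, ρ_r)). With η_ε(u,ρ) = u²/2 + ε·e^ρ and q_ε(u,ρ) = u³/3 + ε·ρ·u·e^ρ, the total entropy-jump coefficient E(ε) = [ −s₁(ε)·(η_ε(u*_ε,ρ*_ε) − η_ε(u_l,ρ_l)) + q_ε(u*_ε,ρ*_ε) − q_ε(u_l,ρ_l) ] + [ −s₂(ε)·(η_ε(u_r,ρ_r) − η_ε(u*_ε,ρ*_ε)) + q_ε(u_r,ρ_r) − q_ε(u*_ε,ρ*_ε) ] satisfies lim_{ε→0} E(ε) = (u_l + u_r)/4·(u_l² − u_r²) + (u_r³ − u_l³)/3 = −(u_l − u_r)³/12, which is strictly negative since u_l > u_r. -/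

import Mathlib

/-!
Write `σ = (u_l + u_r)/2`. Each Rankine–Hugoniot relation bounds `(u* - u_k)²` by `2ε p(ρ*)`, and
since the two velocity gaps add up to `u_l - u_r`, `ε p(ρ*) ≥ (u_l - u_r)²/8`; as `p(ρ) ≤ e^{2ρ}`
this forces `ρ* → ∞`. Dividing the two relations, the ratio of the gaps
`((u_l - u*)/(u* - u_r))²` is a product of three ratios that tend to `1`, so `u* → σ`. Each
relation then gives `ε (p(ρ*) - p(ρ_k)) → (σ - u_k)²/2`, so both shock speeds tend to `σ`, and
`ε e^{ρ*} → 0` because `p(ρ) ~ ρ e^ρ`. The terms `ε ρ* u* e^{ρ*}` of the two flux jumps cancel,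
so `E(ε)` is a polynomial in `s₁, s₂, u*, ε e^{ρ*}, ε` and tends to its value at `(σ, σ, σ, 0, 0)`.
-/

open Real Filter Topology

/-- The pressure-like function `p(ρ) = ∫₀^ρ ξ·e^ξ dξ`. -/
noncomputable def p (ρ : ℝ) : ℝ := ∫ ξ in (0:ℝ)..ρ, ξ * Real.exp ξ

theorem p_eq (ρ : ℝ) : p ρ = (ρ - 1) * exp ρ + 1 := by
  have hderiv (ξ : ℝ) : HasDerivAt (fun x => (x - 1) * exp x) (ξ * exp ξ) ξ :=
    (((hasDerivAt_id' ξ).sub_const 1).mul (hasDerivAt_exp ξ)).congr_deriv (by ring)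
  rw [p, intervalIntegral.integral_eq_sub_of_hasDerivAt (fun ξ _ => hderiv ξ)
    ((continuous_id.mul continuous_exp).intervalIntegrable _ _)]
  simp

theorem p_nonneg (ρ : ℝ) : 0 ≤ p ρ := by
  have h := mul_le_mul_of_nonneg_right (add_one_le_exp (-ρ)) (exp_pos ρ).le
  rw [← exp_add, neg_add_cancel, exp_zero] at h
  rw [p_eq]
  linarith

theorem p_le_exp_two_mul {ρ : ℝ} (hρ : 0 ≤ ρ) : p ρ ≤ exp (2 * ρ) := by
  rw [p_eq, two_mul, exp_add]
  nlinarith [add_one_le_exp ρ, one_le_exp hρ]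

theorem self_le_p {ρ : ℝ} (hρ : 1 ≤ ρ) : ρ ≤ p ρ := by
  rw [p_eq]
  nlinarith [one_le_exp (zero_le_one.trans hρ)]

theorem tendsto_p_atTop : Tendsto p atTop atTop :=
  tendsto_atTop_mono' _ ((eventually_ge_atTop 1).mono fun _ => self_le_p) tendsto_id

theorem tendsto_exp_div_p_atTop : Tendsto (fun ρ => exp ρ / p ρ) atTop (𝓝 0) := by
  have h : Tendsto (fun ρ => ρ - 1 + exp (-ρ)) atTop atTop :=
    (tendsto_atTop_add_const_right _ _ tendsto_id).atTop_add tendsto_exp_neg_atTop_nhds_zero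
  refine h.inv_tendsto_atTop.congr fun ρ => ?_
  rw [Pi.inv_apply, p_eq, exp_neg, ← inv_div]
  congr 1
  field_simp

theorem Filter.Tendsto.add_div_add {α : Type*} {l : Filter α} {f : α → ℝ} (hf : Tendsto f l atTop)
    (a b : ℝ) : Tendsto (fun x => (f x + a) / (f x + b)) l (𝓝 1) := by
  have h : Tendsto (fun x => 1 + (a - b) / (f x + b)) l (𝓝 (1 + 0)) :=
    tendsto_const_nhds.add (tendsto_const_nhds.div_atTop (tendsto_atTop_add_const_right _ b hf))
  rw [add_zero] at h
  refine h.congr' ((hf.eventually_gt_atTop (-b)).mono fun x hx => ?_)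
  have : f x + b ≠ 0 := by linarith
  field_simp
  ring

/-- The two Rankine–Hugoniot conditions of a shock joining `(u₀, ρ₀)` to `(u, ρ)`, with the shock
speed eliminated. -/
def RankineHugoniot (ε u ρ u₀ ρ₀ : ℝ) : Prop :=
  (u - u₀) ^ 2 * (ρ + ρ₀) / 2 = ε * (ρ - ρ₀) * (p ρ - p ρ₀)

namespace RankineHugoniot

variable {ε u ρ u₀ ρ₀ : ℝ}

theorem sq_le (h : RankineHugoniot ε u ρ u₀ ρ₀) (hε : 0 ≤ ε) (hρ₀ : 0 ≤ ρ₀) (hρ : ρ₀ < ρ) :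
    (u - u₀) ^ 2 ≤ 2 * ε * p ρ := by
  unfold RankineHugoniot at h
  have hjump : 0 ≤ ε * (p ρ - p ρ₀) := by
    refine nonneg_of_mul_nonneg_right (a := ρ - ρ₀) ?_ (by linarith)
    nlinarith [sq_nonneg (u - u₀)]
  have := mul_nonneg hε (p_nonneg ρ₀)
  nlinarith [sq_nonneg (u - u₀)]

theorem eps_mul_sub_eq (h : RankineHugoniot ε u ρ u₀ ρ₀) (hρ : ρ₀ ≠ ρ) :
    ε * (p ρ - p ρ₀) = (u - u₀) ^ 2 / 2 * ((ρ + ρ₀) / (ρ - ρ₀)) := by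
  have : ρ - ρ₀ ≠ 0 := sub_ne_zero.2 hρ.symm
  unfold RankineHugoniot at h
  field_simp
  linear_combination (-2) * h

theorem sq_div_sq {u₁ ρ₁ u₂ ρ₂ : ℝ} (h₁ : RankineHugoniot ε u ρ u₁ ρ₁)
    (h₂ : RankineHugoniot ε u ρ u₂ ρ₂) (hu : u ≠ u₂) (hρ₁ : ρ + ρ₁ ≠ 0) (hρ₂ : ρ + ρ₂ ≠ 0) :
    ((u₁ - u) / (u - u₂)) ^ 2
      = (p ρ - p ρ₁) / (p ρ - p ρ₂) * ((ρ - ρ₁) / (ρ + ρ₁)) * ((ρ + ρ₂) / (ρ - ρ₂)) := by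
  unfold RankineHugoniot at h₁ h₂
  have hjump : ε * (ρ - ρ₂) * (p ρ - p ρ₂) ≠ 0 := by
    rw [← h₂]
    exact div_ne_zero (mul_ne_zero (pow_ne_zero 2 (sub_ne_zero.2 hu)) hρ₂) two_ne_zero
  have hρ₂' : ρ - ρ₂ ≠ 0 := right_ne_zero_of_mul (left_ne_zero_of_mul hjump)
  have hp₂ : p ρ - p ρ₂ ≠ 0 := right_ne_zero_of_mul hjump
  have hu' : u - u₂ ≠ 0 := sub_ne_zero.2 hu
  field_simp
  linear_combination (2 * (ρ - ρ₂) * (p ρ - p ρ₂)) * h₁ - (2 * (ρ - ρ₁) * (p ρ - p ρ₁)) * h₂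

end RankineHugoniot

structure TwoShockState (ε ul ρl ur ρr u ρ : ℝ) : Prop where
  velocity_gt_right : ur < u
  velocity_lt_left : u < ul
  density_gt_left : ρl < ρ
  density_gt_right : ρr < ρ
  shock_left : RankineHugoniot ε u ρ ul ρl
  shock_right : RankineHugoniot ε u ρ ur ρr

theorem TwoShockState.le_eps_mul_p {ε ul ρl ur ρr u ρ : ℝ} (h : TwoShockState ε ul ρl ur ρr u ρ)
    (hε : 0 ≤ ε) (hρl : 0 ≤ ρl) (hρr : 0 ≤ ρr) : (ul - ur) ^ 2 / 8 ≤ ε * p ρ := by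
  have hl := h.shock_left.sq_le hε hρl h.density_gt_left
  have hr := h.shock_right.sq_le hε hρr h.density_gt_right
  nlinarith [sq_nonneg (ul - 2 * u + ur)]

section Limits

variable {ul ρl ur ρr σ : ℝ} {us ρs : ℝ → ℝ} {l : Filter ℝ}

theorem tendsto_density_atTop (hu : ur < ul) (hρl : 0 ≤ ρl) (hρr : 0 ≤ ρr)
    (h : ∀ᶠ ε in 𝓝[>] 0, TwoShockState ε ul ρl ur ρr (us ε) (ρs ε)) :
    Tendsto ρs (𝓝[>] 0) atTop := by
  have hK : 0 < (ul - ur) ^ 2 / 8 := by have := sub_pos.2 hu; positivity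
  have hexp : Tendsto (fun ε => exp (2 * ρs ε)) (𝓝[>] 0) atTop := by
    refine tendsto_atTop_mono' _ ?_ (tendsto_inv_nhdsGT_zero.const_mul_atTop hK)
    filter_upwards [h, self_mem_nhdsWithin] with ε hε (hε0 : 0 < ε)
    rw [← div_eq_mul_inv, div_le_iff₀ hε0]
    have := p_le_exp_two_mul (hρl.trans hε.density_gt_left.le)
    nlinarith [hε.le_eps_mul_p hε0.le hρl hρr]
  simpa using (tendsto_exp_comp_atTop.1 hexp).atTop_div_const two_pos

theorem tendsto_velocity (hρ : Tendsto ρs l atTop)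
    (h : ∀ᶠ ε in l, TwoShockState ε ul ρl ur ρr (us ε) (ρs ε)) :
    Tendsto us l (𝓝 ((ul + ur) / 2)) := by
  have hratio : Tendsto (fun ε => ((ul - us ε) / (us ε - ur)) ^ 2) l (𝓝 1) := by
    have := (((tendsto_p_atTop.comp hρ).add_div_add (-p ρl) (-p ρr)).mul
      (hρ.add_div_add (-ρl) ρl)).mul (hρ.add_div_add ρr (-ρr))
    simp only [mul_one, ← sub_eq_add_neg, Function.comp_apply] at this
    refine this.congr' ?_
    filter_upwards [h, hρ.eventually_gt_atTop (-ρl), hρ.eventually_gt_atTop (-ρr)]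
      with ε hε hl hr
    exact (hε.shock_left.sq_div_sq hε.shock_right hε.velocity_gt_right.ne' (by linarith)
      (by linarith)).symm
  have hpos : ∀ᶠ ε in l, 0 ≤ (ul - us ε) / (us ε - ur) := h.mono fun ε hε =>
    div_nonneg (sub_nonneg.2 hε.velocity_lt_left.le) (sub_nonneg.2 hε.velocity_gt_right.le)
  have ht : Tendsto (fun ε => (ul - us ε) / (us ε - ur)) l (𝓝 1) := by
    simpa using hratio.sqrt.congr' (hpos.mono fun ε hε => sqrt_sq hε)
  have hlim : Tendsto (fun ε => (ul + (ul - us ε) / (us ε - ur) * ur)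
      / (1 + (ul - us ε) / (us ε - ur))) l (𝓝 ((ul + 1 * ur) / (1 + 1))) :=
    (tendsto_const_nhds.add (ht.mul_const ur)).div (tendsto_const_nhds.add ht) (by norm_num)
  rw [show (ul + 1 * ur) / (1 + 1) = (ul + ur) / 2 by ring] at hlim
  refine hlim.congr' (h.mono fun ε hε => ?_)
  have := sub_pos.2 hε.velocity_gt_right
  have := sub_pos.2 hε.velocity_lt_left
  field_simp
  ring

variable {uk ρk : ℝ}

theorem tendsto_eps_mul_jump (hρ : Tendsto ρs l atTop) (hu : Tendsto us l (𝓝 σ))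
    (h : ∀ᶠ ε in l, RankineHugoniot ε (us ε) (ρs ε) uk ρk) :
    Tendsto (fun ε => ε * (p (ρs ε) - p ρk)) l (𝓝 ((σ - uk) ^ 2 / 2)) := by
  have := (((hu.sub_const uk).pow 2).div_const 2).mul (hρ.add_div_add ρk (-ρk))
  simp only [mul_one, ← sub_eq_add_neg] at this
  refine this.congr' ?_
  filter_upwards [h, hρ.eventually_gt_atTop ρk] with ε hε hgt
  exact (hε.eps_mul_sub_eq hgt.ne).symm

theorem tendsto_shockSpeed (hσ : σ ≠ uk) (hρ : Tendsto ρs l atTop) (hu : Tendsto us l (𝓝 σ))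
    (h : ∀ᶠ ε in l, RankineHugoniot ε (us ε) (ρs ε) uk ρk) :
    Tendsto (fun ε => (us ε + uk) / 2 + ε * (p (ρs ε) - p ρk) / (us ε - uk)) l (𝓝 σ) := by
  have := ((hu.add_const uk).div_const 2).add
    ((tendsto_eps_mul_jump hρ hu h).div (hu.sub_const uk) (sub_ne_zero.2 hσ))
  have hσ' := sub_ne_zero.2 hσ
  rwa [show (σ + uk) / 2 + (σ - uk) ^ 2 / 2 / (σ - uk) = σ by field_simp; ring] at this

theorem tendsto_eps_mul_exp (hl : l ≤ 𝓝 0) (hρ : Tendsto ρs l atTop) (hu : Tendsto us l (𝓝 σ))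
    (h : ∀ᶠ ε in l, RankineHugoniot ε (us ε) (ρs ε) uk ρk) :
    Tendsto (fun ε => ε * exp (ρs ε)) l (𝓝 0) := by
  have hP : Tendsto (fun ε => ε * p (ρs ε)) l (𝓝 ((σ - uk) ^ 2 / 2 + 0 * p ρk)) :=
    ((tendsto_eps_mul_jump hρ hu h).add ((tendsto_id.mono_left hl).mul_const (p ρk))).congr
      fun ε => by simp only [id_eq]; ring
  have := hP.mul (tendsto_exp_div_p_atTop.comp hρ)
  rw [mul_zero] at this
  refine this.congr' ((hρ.eventually_ge_atTop 1).mono fun ε hε => ?_)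
  have := (zero_lt_one.trans_le hε).trans_le (self_le_p hε)
  simp only [Function.comp_apply]
  field_simp

end Limits

/-- Entropy production in the vanishing-pressure limit: the total entropy-jump
coefficient `E(ε)` for the entropy pair `η_ε(u,ρ) = u²/2 + ε e^ρ`,
`q_ε(u,ρ) = u³/3 + ε ρ u e^ρ` converges to
`(u_l+u_r)/4·(u_l² − u_r²) + (u_r³ − u_l³)/3 = −(u_l − u_r)³/12 < 0`. -/
theorem stmt14 (ul ur ρl ρr η : ℝ) (hu : ur < ul) (hρl : 0 < ρl) (hρr : 0 < ρr)
    (hη : 0 < η) (us ρs s1 s2 : ℝ → ℝ)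
    (hmem : ∀ ε ∈ Set.Ioo (0:ℝ) η, ur < us ε ∧ us ε < ul ∧ max ρl ρr < ρs ε)
    (heq1 : ∀ ε ∈ Set.Ioo (0:ℝ) η,
      (us ε - ul) ^ 2 * (ρs ε + ρl) / 2 = ε * (ρs ε - ρl) * (p (ρs ε) - p ρl))
    (heq2 : ∀ ε ∈ Set.Ioo (0:ℝ) η,
      (us ε - ur) ^ 2 * (ρs ε + ρr) / 2 = ε * (ρs ε - ρr) * (p (ρs ε) - p ρr))
    (hs1 : ∀ ε, s1 ε = (us ε + ul) / 2 + ε * (p (ρs ε) - p ρl) / (us ε - ul))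
    (hs2 : ∀ ε, s2 ε = (us ε + ur) / 2 + ε * (p (ρs ε) - p ρr) / (us ε - ur)) :
    let L : ℝ := (ul + ur) / 4 * (ul ^ 2 - ur ^ 2) + (ur ^ 3 - ul ^ 3) / 3
    Tendsto (fun ε =>
        (-(s1 ε) * ((us ε ^ 2 / 2 + ε * Real.exp (ρs ε)) - (ul ^ 2 / 2 + ε * Real.exp ρl)) +
          (us ε ^ 3 / 3 + ε * ρs ε * us ε * Real.exp (ρs ε)) -
          (ul ^ 3 / 3 + ε * ρl * ul * Real.exp ρl)) +
        (-(s2 ε) * ((ur ^ 2 / 2 + ε * Real.exp ρr) - (us ε ^ 2 / 2 + ε * Real.exp (ρs ε))) +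
          (ur ^ 3 / 3 + ε * ρr * ur * Real.exp ρr) -
          (us ε ^ 3 / 3 + ε * ρs ε * us ε * Real.exp (ρs ε))))
      (𝓝[>] (0:ℝ)) (𝓝 L) ∧ L = -(ul - ur) ^ 3 / 12 ∧ L < 0 := by
  intro L
  have hL : L = -(ul - ur) ^ 3 / 12 := by ring
  refine ⟨?_, hL, by linarith [hL, pow_pos (sub_pos.2 hu) 3]⟩
  have hstate : ∀ᶠ ε in 𝓝[>] 0, TwoShockState ε ul ρl ur ρr (us ε) (ρs ε) := by
    filter_upwards [Ioo_mem_nhdsGT hη] with ε hε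
    obtain ⟨hur, hul, hρ⟩ := hmem ε hε
    exact ⟨hur, hul, (le_max_left _ _).trans_lt hρ, (le_max_right _ _).trans_lt hρ,
      heq1 ε hε, heq2 ε hε⟩
  have hρ := tendsto_density_atTop hu hρl.le hρr.le hstate
  have hus := tendsto_velocity hρ hstate
  have hs1' : Tendsto s1 (𝓝[>] 0) (𝓝 ((ul + ur) / 2)) := funext hs1 ▸
    tendsto_shockSpeed (by linarith) hρ hus (hstate.mono fun _ h => h.shock_left)
  have hs2' : Tendsto s2 (𝓝[>] 0) (𝓝 ((ul + ur) / 2)) := funext hs2 ▸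
    tendsto_shockSpeed (by linarith) hρ hus (hstate.mono fun _ h => h.shock_right)
  have hX := tendsto_eps_mul_exp nhdsWithin_le_nhds hρ hus (hstate.mono fun _ h => h.shock_left)
  have hJ : Continuous fun q : ℝ × ℝ × ℝ × ℝ × ℝ =>
      -q.1 * (q.2.2.1 ^ 2 / 2 + q.2.2.2.1 - (ul ^ 2 / 2 + q.2.2.2.2 * exp ρl))
        + q.2.2.1 ^ 3 / 3 - (ul ^ 3 / 3 + q.2.2.2.2 * ρl * ul * exp ρl)
        + (-q.2.1 * (ur ^ 2 / 2 + q.2.2.2.2 * exp ρr - (q.2.2.1 ^ 2 / 2 + q.2.2.2.1))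
          + (ur ^ 3 / 3 + q.2.2.2.2 * ρr * ur * exp ρr) - q.2.2.1 ^ 3 / 3) := by
    fun_prop
  convert (hJ.tendsto _).comp (hs1'.prodMk_nhds (hs2'.prodMk_nhds
    (hus.prodMk_nhds (hX.prodMk_nhds (tendsto_id.mono_left nhdsWithin_le_nhds))))) using 1
  · funext ε
    simp only [Function.comp_apply, id_eq]
    ring
  · congr 1
    ring
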